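/- Let u be a special tangential derivation of lie_2, i.e., u(x) = ⁅x, a_1⁆ and u(y) = ⁅y, b_1⁆ with ⁅x, a_1⁆ + ⁅y, b_1⁆ = 0 for some a_1, b_1 ∈ lie_2, and let v be a tangential derivation of lie_2 with v(x) = ⁅x, a_2⁆, v(y) = ⁅y, b_2⁆. Let ι: lie_2 → lie_3 be the homomorphism x ↦ x, y ↦ y, and θ: lie_2 → lie_3 the homomorphism x ↦ x + y, y ↦ z. Let U be the derivation of lie_3 (the simplicial image u^{1,2}) determined by U(x) = ⁅x, ι(a_1)⁆, U(y) = ⁅y, ι(b_1)⁆, U(z) = 0, and V the derivation of lie_3 (the coproduct image v^{12,3}) determined by V(x) = ⁅x, θ(a_2)⁆, V(y) = ⁅y, θ(a_2)⁆, V(z) = ⁅z, θ(b_2)⁆. Then ⁅U, V⁆ = 0. -/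

import Mathlib

/-! A derivation `D` with `D x = ⁅x, p⁆`, `D' x = ⁅x, q⁆` satisfies
`⁅D, D'⁆ x = ⁅x, D q - D' p + ⁅p, q⁆⁆` by Jacobi. For `D = U`, `D' = V` the correction term
vanishes on every generator: `U` kills the image of `θ`, as it kills `z` and
`U (x + y) = ι (⁅x, a₁⁆ + ⁅y, b₁⁆) = 0`; and `V` acts on the image of `ι` as `⁅·, θ a₂⁆`,
as it does so on `x` and `y`. -/

open FreeLieAlgebra

noncomputable section

/-- The inclusion `ι : lie_2 → lie_3`, `x ↦ x`, `y ↦ y`. -/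
def incl23 (k : Type) [Field k] :
    FreeLieAlgebra k (Fin 2) →ₗ⁅k⁆ FreeLieAlgebra k (Fin 3) :=
  FreeLieAlgebra.lift k ![of k (0 : Fin 3), of k (1 : Fin 3)]

/-- The coproduct homomorphism `θ : lie_2 → lie_3`, `x ↦ x + y`, `y ↦ z`. -/
def theta (k : Type) [Field k] :
    FreeLieAlgebra k (Fin 2) →ₗ⁅k⁆ FreeLieAlgebra k (Fin 3) :=
  FreeLieAlgebra.lift k ![of k (0 : Fin 3) + of k (1 : Fin 3), of k (2 : Fin 3)]

namespace FreeLieAlgebra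

variable {R X L : Type*} [CommRing R] [LieRing L] [LieAlgebra R L]

theorem lieSpan_range_of : LieSubalgebra.lieSpan R (FreeLieAlgebra R X) (Set.range (of R)) = ⊤ := by
  set S := LieSubalgebra.lieSpan R (FreeLieAlgebra R X) (Set.range (of R))
  let g : FreeLieAlgebra R X →ₗ⁅R⁆ S :=
    lift R fun x => ⟨of R x, LieSubalgebra.subset_lieSpan ⟨x, rfl⟩⟩
  have hg : S.incl.comp g = (LieHom.id : _ →ₗ⁅R⁆ _) := hom_ext fun x => by simp [g]
  refine eq_top_iff.2 fun a _ => ?_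
  rw [← LieHom.id_apply (R := R) a, ← hg]
  exact (g a).2

theorem lieDerivation_apply_hom_ext {f : FreeLieAlgebra R X →ₗ⁅R⁆ L}
    {D₁ D₂ : LieDerivation R L L} (h : ∀ x, D₁ (f (of R x)) = D₂ (f (of R x)))
    (c : FreeLieAlgebra R X) : D₁ (f c) = D₂ (f c) := by
  have hc : f c ∈ LieSubalgebra.lieSpan R L (Set.range (f ∘ of R)) := by
    rw [Set.range_comp, ← LieSubalgebra.map_lieSpan, lieSpan_range_of]
    exact ⟨c, trivial, rfl⟩
  exact LieDerivation.eqOn_lieSpan (by rintro _ ⟨x, rfl⟩; exact h x) hc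

end FreeLieAlgebra

namespace LieDerivation

variable {R L : Type*} [CommRing R] [LieRing L] [LieAlgebra R L]

theorem lie_apply_of_apply_eq_lie {D₁ D₂ : LieDerivation R L L} {x p q : L}
    (h₁ : D₁ x = ⁅x, p⁆) (h₂ : D₂ x = ⁅x, q⁆) :
    ⁅D₁, D₂⁆ x = ⁅x, D₁ q - D₂ p + ⁅p, q⁆⁆ := by
  rw [commutator_apply, h₁, h₂, apply_lie_eq_add, apply_lie_eq_add, h₁, h₂, lie_add, lie_sub,
    leibniz_lie x p q, ← lie_skew ⁅x, q⁆ p]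
  abel

end LieDerivation

section

variable {k : Type} [Field k]

theorem incl23_of_zero : incl23 k (of k 0) = of k 0 := by
  simp [incl23]

theorem incl23_of_one : incl23 k (of k 1) = of k 1 := by
  simp [incl23]

theorem theta_of_zero : theta k (of k 0) = of k 0 + of k 1 := by
  simp [theta]

theorem theta_of_one : theta k (of k 1) = of k 2 := by
  simp [theta]

variable {D : LieDerivation k (FreeLieAlgebra k (Fin 3)) (FreeLieAlgebra k (Fin 3))}

theorem apply_theta_eq_zero {a b : FreeLieAlgebra k (Fin 2)}
    (hspecial : ⁅of k (0 : Fin 2), a⁆ + ⁅of k (1 : Fin 2), b⁆ = 0)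
    (hx : D (of k 0) = ⁅of k (0 : Fin 3), incl23 k a⁆)
    (hy : D (of k 1) = ⁅of k (1 : Fin 3), incl23 k b⁆) (hz : D (of k 2) = 0)
    (c : FreeLieAlgebra k (Fin 2)) : D (theta k c) = 0 := by
  refine lieDerivation_apply_hom_ext (D₂ := 0) (fun i => ?_) c
  fin_cases i
  · have := congr(incl23 k $hspecial)
    simp only [map_add, LieHom.map_lie, incl23_of_zero, incl23_of_one, map_zero] at this
    simpa [theta_of_zero, hx, hy] using this
  · simpa [theta_of_one] using hz

theorem apply_incl23_eq_lie {a : FreeLieAlgebra k (Fin 3)}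
    (hx : D (of k 0) = ⁅of k (0 : Fin 3), a⁆) (hy : D (of k 1) = ⁅of k (1 : Fin 3), a⁆)
    (c : FreeLieAlgebra k (Fin 2)) :
    D (incl23 k c) = ⁅incl23 k c, a⁆ := by
  rw [lieDerivation_apply_hom_ext (D₂ := LieDerivation.ad k _ (-a)) (fun i => ?_) c]
  · simp
  · fin_cases i
    · simpa [incl23_of_zero] using hx
    · simpa [incl23_of_one] using hy

end

theorem simplicial_commutes_with_coproduct_general (k : Type) [Field k]
    (U V : LieDerivation k (FreeLieAlgebra k (Fin 3)) (FreeLieAlgebra k (Fin 3)))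
    (a₁ b₁ a₂ b₂ : FreeLieAlgebra k (Fin 2))
    (huspecial : ⁅of k (0 : Fin 2), a₁⁆ + ⁅of k (1 : Fin 2), b₁⁆ = 0)
    (hUx : U (of k (0 : Fin 3)) = ⁅of k (0 : Fin 3), incl23 k a₁⁆)
    (hUy : U (of k (1 : Fin 3)) = ⁅of k (1 : Fin 3), incl23 k b₁⁆)
    (hUz : U (of k (2 : Fin 3)) = 0)
    (hVx : V (of k (0 : Fin 3)) = ⁅of k (0 : Fin 3), theta k a₂⁆)
    (hVy : V (of k (1 : Fin 3)) = ⁅of k (1 : Fin 3), theta k a₂⁆)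
    (hVz : V (of k (2 : Fin 3)) = ⁅of k (2 : Fin 3), theta k b₂⁆) :
    ⁅U, V⁆ = 0 := by
  have hU := apply_theta_eq_zero huspecial hUx hUy hUz
  have hV := apply_incl23_eq_lie hVx hVy
  have hUz' : U (of k 2) = ⁅of k (2 : Fin 3), 0⁆ := hUz.trans (lie_zero _).symm
  refine LieDerivation.ext_of_lieSpan_eq_top _ lieSpan_range_of ?_
  rintro _ ⟨i, rfl⟩
  rw [LieDerivation.zero_apply]
  fin_cases i
  · exact (LieDerivation.lie_apply_of_apply_eq_lie hUx hVx).trans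
      (by rw [hU, hV, zero_sub, neg_add_cancel, lie_zero])
  · exact (LieDerivation.lie_apply_of_apply_eq_lie hUy hVy).trans
      (by rw [hU, hV, zero_sub, neg_add_cancel, lie_zero])
  · exact (LieDerivation.lie_apply_of_apply_eq_lie hUz' hVz).trans
      (by rw [hU, map_zero, sub_zero, zero_lie, add_zero, lie_zero])

/-- If `u` is a special tangential derivation of `lie_2` and `v` a tangential derivation,
then the simplicial image `U = u^{1,2}` commutes with the coproduct image `V = v^{12,3}`:
`⁅U, V⁆ = 0`. -/
theorem simplicial_commutes_with_coproduct (k : Type) [Field k] [CharZero k]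
    (u v : LieDerivation k (FreeLieAlgebra k (Fin 2)) (FreeLieAlgebra k (Fin 2)))
    (U V : LieDerivation k (FreeLieAlgebra k (Fin 3)) (FreeLieAlgebra k (Fin 3)))
    (a₁ b₁ a₂ b₂ : FreeLieAlgebra k (Fin 2))
    (hux : u (of k (0 : Fin 2)) = ⁅of k (0 : Fin 2), a₁⁆)
    (huy : u (of k (1 : Fin 2)) = ⁅of k (1 : Fin 2), b₁⁆)
    (huspecial : ⁅of k (0 : Fin 2), a₁⁆ + ⁅of k (1 : Fin 2), b₁⁆ = 0)
    (hvx : v (of k (0 : Fin 2)) = ⁅of k (0 : Fin 2), a₂⁆)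
    (hvy : v (of k (1 : Fin 2)) = ⁅of k (1 : Fin 2), b₂⁆)
    (hUx : U (of k (0 : Fin 3)) = ⁅of k (0 : Fin 3), incl23 k a₁⁆)
    (hUy : U (of k (1 : Fin 3)) = ⁅of k (1 : Fin 3), incl23 k b₁⁆)
    (hUz : U (of k (2 : Fin 3)) = 0)
    (hVx : V (of k (0 : Fin 3)) = ⁅of k (0 : Fin 3), theta k a₂⁆)
    (hVy : V (of k (1 : Fin 3)) = ⁅of k (1 : Fin 3), theta k a₂⁆)
    (hVz : V (of k (2 : Fin 3)) = ⁅of k (2 : Fin 3), theta k b₂⁆) :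
    ⁅U, V⁆ = 0 :=
  simplicial_commutes_with_coproduct_general k U V a₁ b₁ a₂ b₂ huspecial hUx hUy hUz hVx hVy hVz
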